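/- arXiv:2602.00975 — 2 statements merged into one kernel-verified Lean document; each statement's English description precedes it below -/
import Mathlib

section
/- Fix integers d ≥ 3 and ℓ ≥ 1, and let z, Δ ∈ ℂ with Im z > 0 and Im Δ ≥ 0. Define Y_ℓ(Δ,z) := ((H_{𝒴_ℓ} − z·I − Δ·𝕀∂)⁻¹)_{oo} and X_ℓ(Δ,z) := ((H_{𝒳_ℓ} − z·I − Δ·𝕀∂)⁻¹)_{oo}. Then m_sc(z) is a fixed point of Y_ℓ and X_ℓ evaluates m_d at it: Y_ℓ(m_sc(z), z) = m_sc(z) and X_ℓ(m_sc(z), z) = m_d(z). -/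
open scoped Classical

noncomputable section

/-- Vertices of the ball of radius `ℓ` in the infinite `m`-ary rooted tree:
words over `Fin m` of length at most `ℓ`. -/
def TreeBallY (m ℓ : ℕ) : Type := {l : List (Fin m) // l.length ≤ ℓ}

instance (m ℓ : ℕ) : DecidableEq (TreeBallY m ℓ) :=
  inferInstanceAs (DecidableEq {l : List (Fin m) // l.length ≤ ℓ})

instance (m ℓ : ℕ) : Fintype (TreeBallY m ℓ) :=
  Fintype.ofSurjective
    (fun p : (Σ k : Fin (ℓ + 1), List.Vector (Fin m) k) =>
      (⟨p.2.toList, by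
        have h1 : p.2.toList.length = (p.1 : ℕ) := p.2.toList_length
        have h2 := p.1.isLt
        omega⟩ : TreeBallY m ℓ))
    (fun l => ⟨⟨⟨l.1.length, Nat.lt_succ_of_le l.2⟩, ⟨l.1, rfl⟩⟩, rfl⟩)

/-- The tree structure on the ball of radius `ℓ` of the `m`-ary rooted tree:
`x` is adjacent to `y` iff one of them is obtained from the other by appending one letter
(i.e. one is the parent of the other). -/
def treeGraphY (m ℓ : ℕ) : SimpleGraph (TreeBallY m ℓ) :=
  SimpleGraph.fromRel (fun x y => ∃ a : Fin m, y.1 = x.1 ++ [a])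

/-- The root of the tree: the empty word. -/
def rootY (m ℓ : ℕ) : TreeBallY m ℓ := ⟨[], Nat.zero_le _⟩

/-- The normalized adjacency matrix `A/√(d-1)` of the ball `𝒴_ℓ` of radius `ℓ` in the
infinite `(d-1)`-ary tree. -/
def HmatY (d ℓ : ℕ) : Matrix (TreeBallY (d - 1) ℓ) (TreeBallY (d - 1) ℓ) ℂ :=
  fun x y => if (treeGraphY (d - 1) ℓ).Adj x y then (Real.sqrt ((d : ℝ) - 1) : ℂ)⁻¹ else 0

/-- The leaf indicator `𝕀∂` of `𝒴_ℓ`: the diagonal 0-1 matrix whose entry at `x` is `1`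
exactly when `dist(x, o) = ℓ`. -/
def IbdY (d ℓ : ℕ) : Matrix (TreeBallY (d - 1) ℓ) (TreeBallY (d - 1) ℓ) ℂ :=
  Matrix.diagonal (fun x => if (treeGraphY (d - 1) ℓ).dist (rootY (d - 1) ℓ) x = ℓ then 1 else 0)

/-- Vertices of the ball `𝒳_ℓ` of radius `ℓ` in the infinite `d`-regular tree: the root
(`none`), or a first step in `Fin d` followed by a word over `Fin (d-1)` of length at most
`ℓ - 1`. -/
def TreeBallX (d ℓ : ℕ) : Type := Option (Fin d × TreeBallY (d - 1) (ℓ - 1))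

instance (d ℓ : ℕ) : DecidableEq (TreeBallX d ℓ) :=
  inferInstanceAs (DecidableEq (Option (Fin d × TreeBallY (d - 1) (ℓ - 1))))

instance (d ℓ : ℕ) : Fintype (TreeBallX d ℓ) :=
  inferInstanceAs (Fintype (Option (Fin d × TreeBallY (d - 1) (ℓ - 1))))

/-- The tree structure on the ball `𝒳_ℓ` of radius `ℓ` of the `d`-regular tree: the root is
adjacent to the `d` one-step vertices, and within each branch two vertices are adjacent iff one
is the parent of the other. -/
def treeGraphX (d ℓ : ℕ) : SimpleGraph (TreeBallX d ℓ) :=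
  SimpleGraph.fromRel (fun x y =>
    (∃ a : Fin d, x = none ∧ y = some (a, ⟨[], Nat.zero_le _⟩)) ∨
    (∃ (a : Fin d) (s t : TreeBallY (d - 1) (ℓ - 1)),
      x = some (a, s) ∧ y = some (a, t) ∧ ∃ b : Fin (d - 1), t.1 = s.1 ++ [b]))

/-- The root of the `d`-regular tree ball `𝒳_ℓ`. -/
def rootX (d ℓ : ℕ) : TreeBallX d ℓ := none

/-- The normalized adjacency matrix `A/√(d-1)` of the ball `𝒳_ℓ` of radius `ℓ` in the
infinite `d`-regular tree. -/
def HmatX (d ℓ : ℕ) : Matrix (TreeBallX d ℓ) (TreeBallX d ℓ) ℂ :=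
  fun x y => if (treeGraphX d ℓ).Adj x y then (Real.sqrt ((d : ℝ) - 1) : ℂ)⁻¹ else 0

/-- The leaf indicator `𝕀∂` of `𝒳_ℓ`. -/
def IbdX (d ℓ : ℕ) : Matrix (TreeBallX d ℓ) (TreeBallX d ℓ) ℂ :=
  Matrix.diagonal (fun x => if (treeGraphX d ℓ).dist (rootX d ℓ) x = ℓ then 1 else 0)

/-- Longest common prefix of two words. -/
def lcp {m : ℕ} : List (Fin m) → List (Fin m) → List (Fin m)
  | [], _ => []
  | _ :: _, [] => []
  | a :: s, b :: t => if a = b then a :: lcp s t else []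

theorem lcp_length_le_left {m : ℕ} : ∀ s t : List (Fin m), (lcp s t).length ≤ s.length
  | [], _ => by simp [lcp]
  | _ :: _, [] => by simp [lcp]
  | a :: s, b :: t => by
    by_cases h : a = b
    · simp only [lcp, if_pos h, List.length_cons]
      exact Nat.succ_le_succ (lcp_length_le_left s t)
    · simp [lcp, h]

/-- The least common ancestor of two vertices of `𝒴_ℓ`: their longest common prefix. -/
def lcaY {m ℓ : ℕ} (x y : TreeBallY m ℓ) : TreeBallY m ℓ :=
  ⟨lcp x.1 y.1, le_trans (lcp_length_le_left _ _) x.2⟩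

/-- `anc(x,y)`: the distance from the least common ancestor of `x` and `y` to the root `o`. -/
def ancY {m ℓ : ℕ} (x y : TreeBallY m ℓ) : ℕ :=
  (treeGraphY m ℓ).dist (rootY m ℓ) (lcaY x y)

end

/-!
The root entry of the resolvent is read off from an explicit solution of `M v = e_o`, where
`M = H - z - m_sc 𝕀∂`. Take `v` radial, `v x = a rⁿ` at depth `n`, with `r = -m_sc / √(d-1)`.
At a vertex strictly between the root and the leaves the row of `M v` is
`a rⁿ⁻¹ (1 + m_sc² + z m_sc) / √(d-1) = 0`; at a leaf the boundary term `-m_sc v x` takes the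
place of the `d-1` missing children and gives the same quadratic. The root row then fixes `a`:
`a (-z - m_sc) = 1`, i.e. `a = m_sc`, on `𝒴_ℓ`, and `a (-z - d/(d-1) m_sc) = 1` on `𝒳_ℓ`, whose
root has `d` children. `M` is invertible because its imaginary part is negative definite.
-/

open Matrix ComplexOrder

section Resolvent

variable {n : Type*} [Fintype n] [DecidableEq n]

theorem Matrix.isUnit_det_sub_smul_one_sub_smul {H P : Matrix n n ℂ} (hH : H.IsHermitian)
    (hP : P.PosSemidef) {z Δ : ℂ} (hz : 0 < z.im) (hΔ : 0 ≤ Δ.im) :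
    IsUnit (H - z • 1 - Δ • P).det := by
  rw [isUnit_iff_ne_zero]
  intro hdet
  obtain ⟨x, hx0, hx⟩ := exists_mulVec_eq_zero_iff.mpr hdet
  have hquad : star x ⬝ᵥ (H *ᵥ x) - z * (star x ⬝ᵥ x) - Δ * (star x ⬝ᵥ (P *ᵥ x)) = 0 := by
    simpa [sub_mulVec, smul_mulVec, dotProduct_sub] using congrArg (star x ⬝ᵥ ·) hx
  have hHx : (star x ⬝ᵥ (H *ᵥ x)).im = 0 := hH.im_star_dotProduct_mulVec_self x
  obtain ⟨hxx, hxx'⟩ := Complex.pos_iff.mp (dotProduct_star_self_pos_iff.mpr hx0)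
  obtain ⟨hPx, hPx'⟩ := Complex.nonneg_iff.mp (hP.dotProduct_mulVec_nonneg x)
  have := congrArg Complex.im hquad
  simp only [Complex.sub_im, Complex.mul_im, hHx, ← hxx', ← hPx', Complex.zero_im] at this
  nlinarith [mul_pos hz hxx, mul_nonneg hΔ hPx]

theorem Matrix.inv_apply_eq_of_mulVec_eq_single {M : Matrix n n ℂ} (hM : IsUnit M.det)
    {v : n → ℂ} {o : n} (hv : M *ᵥ v = Pi.single o 1) (i : n) : M⁻¹ i o = v i := by
  have : M⁻¹ *ᵥ (M *ᵥ v) = v := by rw [mulVec_mulVec, nonsing_inv_mul M hM, one_mulVec]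
  rw [← this, hv, mulVec_single_one]
  rfl

end Resolvent

theorem SimpleGraph.dist_eq_of_depth {V : Type*} {G : SimpleGraph V} {o : V} (φ : V → ℕ)
    (h0 : φ o = 0) (hadj : ∀ x y, G.Adj x y → φ y ≤ φ x + 1)
    (hparent : ∀ x, x ≠ o → ∃ y, G.Adj y x ∧ φ x = φ y + 1) (x : V) :
    G.dist o x = φ x := by
  have hwalk : ∀ n x, φ x = n → ∃ w : G.Walk o x, w.length = n := by
    intro n
    induction n with
    | zero =>
      intro x hx
      obtain rfl : x = o := by_contra fun hxo => by
        obtain ⟨y, -, hy⟩ := hparent x hxo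
        omega
      exact ⟨.nil, rfl⟩
    | succ n ih =>
      intro x hx
      obtain ⟨y, hyx, hy⟩ := hparent x (by rintro rfl; omega)
      obtain ⟨w, hw⟩ := ih y (by omega)
      exact ⟨w.concat hyx, by rw [SimpleGraph.Walk.length_concat, hw]⟩
  have hlower : ∀ {u v} (p : G.Walk u v), φ v ≤ φ u + p.length := by
    intro u v p
    induction p with
    | nil => simp
    | cons h _ ih =>
      rw [SimpleGraph.Walk.length_cons]
      have := hadj _ _ h
      omega
  obtain ⟨w, hw⟩ := hwalk _ x rfl
  obtain ⟨p, hp⟩ := SimpleGraph.Reachable.exists_walk_length_eq_dist ⟨w⟩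
  have := hlower p
  have := SimpleGraph.dist_le w
  omega

theorem List.exists_eq_append_singleton_iff {α : Type*} {l l' : List α} :
    (∃ a, l = l' ++ [a]) ↔ l ≠ [] ∧ l' = l.dropLast := by
  constructor
  · rintro ⟨a, rfl⟩
    simp
  · rintro ⟨hl, rfl⟩
    exact ⟨l.getLast hl, (List.dropLast_append_getLast hl).symm⟩

section TreeBallY

variable {m ℓ : ℕ}

theorem treeGraphY_adj_iff {x y : TreeBallY m ℓ} :
    (treeGraphY m ℓ).Adj x y ↔ (∃ a, y.1 = x.1 ++ [a]) ∨ (∃ a, x.1 = y.1 ++ [a]) := by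
  refine (SimpleGraph.fromRel_adj _ _ _).trans ⟨And.right, fun h => ⟨?_, h⟩⟩
  rintro rfl
  simp at h

theorem treeGraphY_adj_length {x y : TreeBallY m ℓ} (h : (treeGraphY m ℓ).Adj x y) :
    y.1.length = x.1.length + 1 ∨ x.1.length = y.1.length + 1 := by
  rcases treeGraphY_adj_iff.mp h with ⟨a, ha⟩ | ⟨a, ha⟩ <;> simp [ha]

@[simp] theorem rootY_val : (rootY m ℓ).1 = [] := rfl

theorem rootY_eq_iff {x : TreeBallY m ℓ} : x = rootY m ℓ ↔ x.1 = [] := Subtype.ext_iff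

theorem exists_treeGraphY_adj_of_ne_nil {x : TreeBallY m ℓ} (hx : x.1 ≠ []) :
    ∃ y : TreeBallY m ℓ, y.1 = x.1.dropLast ∧ (treeGraphY m ℓ).Adj y x :=
  ⟨⟨x.1.dropLast, by rw [List.length_dropLast]; exact (Nat.sub_le _ _).trans x.2⟩, rfl,
    treeGraphY_adj_iff.mpr (.inl (List.exists_eq_append_singleton_iff.mpr ⟨hx, rfl⟩))⟩

theorem treeGraphY_dist_rootY (x : TreeBallY m ℓ) :
    (treeGraphY m ℓ).dist (rootY m ℓ) x = x.1.length := by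
  refine SimpleGraph.dist_eq_of_depth (o := rootY m ℓ) (fun x => x.1.length) rfl
    (fun x y h => by rcases treeGraphY_adj_length h with h | h <;> omega) (fun x hx => ?_) x
  have hx : x.1 ≠ [] := mt rootY_eq_iff.mpr hx
  obtain ⟨y, hy, hyx⟩ := exists_treeGraphY_adj_of_ne_nil hx
  refine ⟨y, hyx, ?_⟩
  simp only [hy, List.length_dropLast]
  have := List.length_pos_iff.mpr hx
  omega

theorem sum_treeBallY_ite_val_eq (L : List (Fin m)) (f : List (Fin m) → ℂ) :
    ∑ y : TreeBallY m ℓ, (if y.1 = L then f y.1 else 0) = if L.length ≤ ℓ then f L else 0 := by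
  split_ifs with hL
  · refine (Finset.sum_eq_single (⟨L, hL⟩ : TreeBallY m ℓ) (fun y _ hy => if_neg ?_) ?_).trans
      (if_pos rfl)
    · exact fun h => hy (Subtype.ext h)
    · exact fun h => (h (Finset.mem_univ (α := TreeBallY m ℓ) _)).elim
  · refine Finset.sum_eq_zero fun y _ => if_neg ?_
    rintro rfl
    exact hL y.2

theorem sum_treeGraphY_parent (x : TreeBallY m ℓ) (g : ℕ → ℂ) :
    ∑ y : TreeBallY m ℓ, (if ∃ a, x.1 = y.1 ++ [a] then g y.1.length else 0) =
      if x.1 = [] then 0 else g (x.1.length - 1) := by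
  by_cases hx : x.1 = []
  · rw [if_pos hx]
    refine Finset.sum_eq_zero fun y _ => if_neg ?_
    simp [hx]
  · have hparent : ∀ y : TreeBallY m ℓ, (∃ a, x.1 = y.1 ++ [a]) ↔ y.1 = x.1.dropLast := by
      simp [List.exists_eq_append_singleton_iff, hx]
    rw [Finset.sum_congr rfl fun y _ => if_congr (hparent y) rfl rfl,
      sum_treeBallY_ite_val_eq x.1.dropLast (fun l => g l.length),
      if_pos (by rw [List.length_dropLast]; exact (Nat.sub_le _ _).trans x.2), if_neg hx,
      List.length_dropLast]

theorem sum_treeGraphY_children (x : TreeBallY m ℓ) (g : ℕ → ℂ) :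
    ∑ y : TreeBallY m ℓ, (if ∃ a, y.1 = x.1 ++ [a] then g y.1.length else 0) =
      if x.1.length < ℓ then m * g (x.1.length + 1) else 0 := by
  have hunique : ∀ y : TreeBallY m ℓ, (if ∃ a, y.1 = x.1 ++ [a] then g y.1.length else 0) =
      ∑ a : Fin m, if y.1 = x.1 ++ [a] then g y.1.length else 0 := by
    intro y
    by_cases h : ∃ a, y.1 = x.1 ++ [a]
    · obtain ⟨a, ha⟩ := h
      simp [ha]
    · push Not at h
      simp [h]
  simp_rw [hunique]
  rw [Finset.sum_comm]
  simp_rw [sum_treeBallY_ite_val_eq _ (fun l => g l.length)]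
  split_ifs with hx <;> simp [hx]

theorem sum_treeGraphY_adj (x : TreeBallY m ℓ) (g : ℕ → ℂ) :
    ∑ y, (if (treeGraphY m ℓ).Adj x y then g y.1.length else 0) =
      (if x.1 = [] then 0 else g (x.1.length - 1)) +
        if x.1.length < ℓ then m * g (x.1.length + 1) else 0 := by
  rw [← sum_treeGraphY_parent, ← sum_treeGraphY_children, ← Finset.sum_add_distrib]
  refine Finset.sum_congr rfl fun y _ => ?_
  rw [treeGraphY_adj_iff]
  by_cases hc : ∃ a, y.1 = x.1 ++ [a]
  · have hp : ¬ ∃ a, x.1 = y.1 ++ [a] := by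
      rintro ⟨a, ha⟩
      obtain ⟨b, hb⟩ := hc
      have := congrArg List.length (ha.trans (congrArg (· ++ [a]) hb))
      simp at this
    simp [hc, hp]
  · by_cases hp : ∃ a, x.1 = y.1 ++ [a] <;> simp [hc, hp]

end TreeBallY

section TreeBallX

variable {d ℓ : ℕ}

-- `some (a, t)` alone elaborates at type `Option _`, which `rw` and `simp` do not match against
-- terms of type `TreeBallX d ℓ`.
def branchX (a : Fin d) (t : TreeBallY (d - 1) (ℓ - 1)) : TreeBallX d ℓ := some (a, t)

def depthX (x : TreeBallX d ℓ) : ℕ := Option.elim x 0 fun p => p.2.1.length + 1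

@[simp] theorem depthX_rootX : depthX (rootX d ℓ) = 0 := rfl

@[simp] theorem depthX_branchX (a : Fin d) (t : TreeBallY (d - 1) (ℓ - 1)) :
    depthX (branchX (ℓ := ℓ) a t) = t.1.length + 1 := rfl

theorem eq_rootX_or_branchX (x : TreeBallX d ℓ) : x = rootX d ℓ ∨ ∃ a t, x = branchX a t := by
  rcases x with _ | ⟨a, t⟩
  exacts [.inl rfl, .inr ⟨a, t, rfl⟩]

theorem branchX_ne_rootX (a : Fin d) (t : TreeBallY (d - 1) (ℓ - 1)) :
    branchX a t ≠ rootX d ℓ :=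
  Option.some_ne_none _

theorem sum_treeBallX (f : TreeBallX d ℓ → ℂ) :
    ∑ x, f x = f (rootX d ℓ) + ∑ a : Fin d, ∑ t : TreeBallY (d - 1) (ℓ - 1), f (branchX a t) :=
  (Fintype.sum_option f).trans (congrArg _ (Fintype.sum_prod_type _))

theorem treeGraphX_adj_rootX_branchX {a : Fin d} {t : TreeBallY (d - 1) (ℓ - 1)} :
    (treeGraphX d ℓ).Adj (rootX d ℓ) (branchX a t) ↔ t = rootY (d - 1) (ℓ - 1) := by
  refine (SimpleGraph.fromRel_adj _ _ _).trans ?_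
  unfold TreeBallX rootX branchX
  simp only [ne_eq, reduceCtorEq, not_false_eq_true, Option.some.injEq, true_and, false_and,
    exists_false, or_false, and_false]
  exact ⟨fun ⟨_, h⟩ => (Prod.mk.inj h).2, fun h => ⟨a, h ▸ rfl⟩⟩

theorem treeGraphX_adj_branchX_branchX {a b : Fin d} {s t : TreeBallY (d - 1) (ℓ - 1)} :
    (treeGraphX d ℓ).Adj (branchX a s) (branchX b t) ↔
      a = b ∧ (treeGraphY (d - 1) (ℓ - 1)).Adj s t := by
  refine (SimpleGraph.fromRel_adj _ _ _).trans ?_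
  rw [treeGraphY_adj_iff]
  unfold TreeBallX branchX
  simp only [ne_eq, Option.some.injEq, Prod.mk.injEq, not_and, reduceCtorEq, false_and,
    exists_false, false_or, exists_and_left, existsAndEq, true_and]
  aesop

theorem sum_treeGraphX_adj_rootX (g : ℕ → ℂ) :
    ∑ y, (if (treeGraphX d ℓ).Adj (rootX d ℓ) y then g (depthX y) else 0) = d * g 1 := by
  rw [sum_treeBallX, if_neg (SimpleGraph.irrefl _), zero_add]
  simp only [treeGraphX_adj_rootX_branchX, depthX_branchX, Finset.sum_ite_eq', Finset.mem_univ,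
    if_true]
  simp

theorem sum_treeGraphX_adj_branchX (a : Fin d) (w : TreeBallY (d - 1) (ℓ - 1)) (g : ℕ → ℂ) :
    ∑ y, (if (treeGraphX d ℓ).Adj (branchX a w) y then g (depthX y) else 0) =
      g w.1.length + if w.1.length < ℓ - 1 then ((d - 1 : ℕ) : ℂ) * g (w.1.length + 2) else 0 := by
  rw [sum_treeBallX]
  simp only [treeGraphX_adj_branchX_branchX, ite_and, Finset.sum_ite_irrel, Finset.sum_const_zero,
    Finset.sum_ite_eq, Finset.mem_univ, if_true, depthX_branchX]
  rw [(treeGraphX d ℓ).adj_comm, treeGraphX_adj_rootX_branchX,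
    sum_treeGraphY_adj w (fun n => g (n + 1))]
  by_cases hw : w.1 = []
  · simp [hw, rootY_eq_iff]
  · have := List.length_pos_iff.mpr hw
    rw [if_neg (mt rootY_eq_iff.mp hw), if_neg hw, Nat.sub_add_cancel this, zero_add]

theorem treeGraphX_dist_rootX (x : TreeBallX d ℓ) :
    (treeGraphX d ℓ).dist (rootX d ℓ) x = depthX x := by
  refine SimpleGraph.dist_eq_of_depth depthX rfl (fun x y hxy => ?_) (fun x hx => ?_) x
  · rcases eq_rootX_or_branchX x with rfl | ⟨a, s, rfl⟩ <;>
      rcases eq_rootX_or_branchX y with rfl | ⟨b, t, rfl⟩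
    · exact absurd hxy (SimpleGraph.irrefl _)
    · simp [treeGraphX_adj_rootX_branchX.mp hxy]
    · simp
    · rcases treeGraphY_adj_length (treeGraphX_adj_branchX_branchX.mp hxy).2 with h | h <;>
        simp only [depthX_branchX] <;> omega
  · obtain ⟨a, w, rfl⟩ := (eq_rootX_or_branchX x).resolve_left hx
    by_cases hw : w.1 = []
    · exact ⟨rootX d ℓ, treeGraphX_adj_rootX_branchX.mpr (rootY_eq_iff.mpr hw), by simp [hw]⟩
    · obtain ⟨p, hp, hpw⟩ := exists_treeGraphY_adj_of_ne_nil hw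
      refine ⟨branchX a p, treeGraphX_adj_branchX_branchX.mpr ⟨rfl, hpw⟩, ?_⟩
      have := List.length_pos_iff.mpr hw
      simp only [depthX_branchX, hp, List.length_dropLast]
      omega

end TreeBallX

section GraphResolvent

variable {V : Type*} (G : SimpleGraph V) [DecidableRel G.Adj]

theorem SimpleGraph.isHermitian_smul_adjMatrix {c : ℂ} (hc : star c = c) :
    (c • G.adjMatrix ℂ).IsHermitian := by
  rw [IsHermitian, conjTranspose_smul, hc, (G.isHermitian_adjMatrix ℂ).eq]

variable [Fintype V] [DecidableEq V]

theorem SimpleGraph.smul_adjMatrix_sub_mulVec_apply (c z Δ : ℂ) (e v : V → ℂ) (x : V) :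
    ((c • G.adjMatrix ℂ - z • 1 - Δ • diagonal e) *ᵥ v) x =
      c * ∑ y, (if G.Adj x y then v y else 0) - (z + Δ * e x) * v x := by
  simp only [sub_mulVec, smul_mulVec, one_mulVec, Pi.sub_apply, Pi.smul_apply, smul_eq_mul,
    mulVec_diagonal, adjMatrix_mulVec_apply, ← Finset.sum_filter, neighborFinset_eq_filter]
  ring

end GraphResolvent

/-- Row `n` of `c • A - z • 1 - Δ • 𝕀∂` applied to the radial vector `x ↦ g (depth x)`, on a
tree of height `ℓ` whose vertices at depth `n` have `m` children. -/
def radialRow (c z Δ : ℂ) (m ℓ : ℕ) (g : ℕ → ℂ) (n : ℕ) : ℂ :=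
  c * ((if n = 0 then 0 else g (n - 1)) + if n < ℓ then m * g (n + 1) else 0) -
    (z + Δ * if n = ℓ then 1 else 0) * g n

section TreeResolvents

variable {d ℓ : ℕ}

theorem HmatY_eq_smul_adjMatrix :
    HmatY d ℓ = (Real.sqrt ((d : ℝ) - 1) : ℂ)⁻¹ • (treeGraphY (d - 1) ℓ).adjMatrix ℂ := by
  ext x y
  simp [HmatY, SimpleGraph.adjMatrix_apply]

theorem HmatX_eq_smul_adjMatrix :
    HmatX d ℓ = (Real.sqrt ((d : ℝ) - 1) : ℂ)⁻¹ • (treeGraphX d ℓ).adjMatrix ℂ := by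
  ext x y
  simp [HmatX, SimpleGraph.adjMatrix_apply]

theorem IbdY_eq_diagonal : IbdY d ℓ = diagonal fun x => if x.1.length = ℓ then 1 else 0 := by
  simp only [IbdY, treeGraphY_dist_rootY]

theorem IbdX_eq_diagonal : IbdX d ℓ = diagonal fun x => if depthX x = ℓ then 1 else 0 := by
  simp only [IbdX, treeGraphX_dist_rootX]

theorem isHermitian_HmatY : (HmatY d ℓ).IsHermitian := by
  rw [HmatY_eq_smul_adjMatrix]
  exact SimpleGraph.isHermitian_smul_adjMatrix _ (by simp)

theorem isHermitian_HmatX : (HmatX d ℓ).IsHermitian := by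
  rw [HmatX_eq_smul_adjMatrix]
  exact SimpleGraph.isHermitian_smul_adjMatrix _ (by simp)

theorem posSemidef_IbdY : (IbdY d ℓ).PosSemidef := by
  rw [IbdY_eq_diagonal, posSemidef_diagonal_iff]
  intro x
  split_ifs <;> norm_num

theorem posSemidef_IbdX : (IbdX d ℓ).PosSemidef := by
  rw [IbdX_eq_diagonal, posSemidef_diagonal_iff]
  intro x
  split_ifs <;> norm_num

theorem resolventY_mulVec_radial_apply (z Δ : ℂ) (g : ℕ → ℂ) (x : TreeBallY (d - 1) ℓ) :
    ((HmatY d ℓ - z • 1 - Δ • IbdY d ℓ) *ᵥ fun y => g y.1.length) x =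
      radialRow (Real.sqrt ((d : ℝ) - 1) : ℂ)⁻¹ z Δ (d - 1) ℓ g x.1.length := by
  rw [HmatY_eq_smul_adjMatrix, IbdY_eq_diagonal, SimpleGraph.smul_adjMatrix_sub_mulVec_apply,
    sum_treeGraphY_adj, radialRow]
  simp [List.length_eq_zero_iff]

theorem resolventX_mulVec_radial_apply_branchX (z Δ : ℂ) (g : ℕ → ℂ) (a : Fin d)
    (w : TreeBallY (d - 1) (ℓ - 1)) :
    ((HmatX d ℓ - z • 1 - Δ • IbdX d ℓ) *ᵥ fun y => g (depthX y)) (branchX a w) =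
      radialRow (Real.sqrt ((d : ℝ) - 1) : ℂ)⁻¹ z Δ (d - 1) ℓ g (w.1.length + 1) := by
  rw [HmatX_eq_smul_adjMatrix, IbdX_eq_diagonal, SimpleGraph.smul_adjMatrix_sub_mulVec_apply,
    sum_treeGraphX_adj_branchX, radialRow]
  simp only [Nat.lt_sub_iff_add_lt, depthX_branchX, Nat.add_eq_zero_iff, one_ne_zero, and_false,
    if_false, Nat.add_sub_cancel]
  rfl

theorem resolventX_mulVec_radial_apply_rootX (hℓ : 1 ≤ ℓ) (z Δ : ℂ) (g : ℕ → ℂ) :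
    ((HmatX d ℓ - z • 1 - Δ • IbdX d ℓ) *ᵥ fun y => g (depthX y)) (rootX d ℓ) =
      radialRow (Real.sqrt ((d : ℝ) - 1) : ℂ)⁻¹ z Δ d ℓ g 0 := by
  rw [HmatX_eq_smul_adjMatrix, IbdX_eq_diagonal, SimpleGraph.smul_adjMatrix_sub_mulVec_apply,
    sum_treeGraphX_adj_rootX, radialRow, if_pos (by omega : 0 < ℓ), depthX_rootX,
    if_neg (by omega : 0 ≠ ℓ)]
  simp

end TreeResolvents

section Geometric

variable {K z Δ : ℂ} {m ℓ : ℕ}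

theorem radialRow_geometric_eq_zero (hK : K ≠ 0) (hKm : K ^ 2 = m) (hΔ : Δ ^ 2 + z * Δ + 1 = 0)
    (a : ℂ) {n : ℕ} (hn : 1 ≤ n) (hnℓ : n ≤ ℓ) :
    radialRow K⁻¹ z Δ m ℓ (fun k => a * (-Δ / K) ^ k) n = 0 := by
  have hinterior : K⁻¹ + m * K⁻¹ * (-Δ / K) ^ 2 - z * (-Δ / K) = 0 := by
    rw [← hKm]
    field_simp
    linear_combination hΔ
  have hleaf : K⁻¹ - (z + Δ) * (-Δ / K) = 0 := by
    field_simp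
    linear_combination hΔ
  obtain ⟨k, rfl⟩ : ∃ k, n = k + 1 := ⟨n - 1, by omega⟩
  simp only [radialRow, Nat.add_eq_zero_iff, one_ne_zero, and_false, if_false, Nat.add_sub_cancel]
  split_ifs with hlt heq heq
  · omega
  · linear_combination (a * (-Δ / K) ^ k) * hinterior
  · linear_combination (a * (-Δ / K) ^ k) * hleaf
  · omega

theorem radialRow_geometric_zero (hK : K ≠ 0) (hℓ : 1 ≤ ℓ) (a : ℂ) :
    radialRow K⁻¹ z Δ m ℓ (fun k => a * (-Δ / K) ^ k) 0 = a * (-z - m / K ^ 2 * Δ) := by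
  simp only [radialRow, if_true, if_pos (by omega : 0 < ℓ), if_neg (by omega : 0 ≠ ℓ), zero_add,
    mul_zero, add_zero, pow_one, pow_zero, mul_one]
  field_simp
  ring

end Geometric

theorem ofReal_sqrt_natCast_sub_one_sq {d : ℕ} (hd : 1 ≤ d) :
    (Real.sqrt ((d : ℝ) - 1) : ℂ) ^ 2 = ((d - 1 : ℕ) : ℂ) := by
  rw [← Complex.ofReal_pow, Real.sq_sqrt (by simpa using hd)]
  push_cast [hd]
  rfl

theorem ofReal_sqrt_natCast_sub_one_ne_zero {d : ℕ} (hd : 2 ≤ d) :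
    (Real.sqrt ((d : ℝ) - 1) : ℂ) ≠ 0 := by
  have : (2 : ℝ) ≤ d := by exact_mod_cast hd
  exact Complex.ofReal_ne_zero.mpr (Real.sqrt_ne_zero'.mpr (by linarith))

section FixedPoint

variable {d ℓ : ℕ} {z Δ : ℂ}

theorem resolventY_rootY (hd : 2 ≤ d) (hℓ : 1 ≤ ℓ) (hz : 0 < z.im) (hΔ : 0 ≤ Δ.im)
    (hΔz : Δ ^ 2 + z * Δ + 1 = 0) :
    (HmatY d ℓ - z • 1 - Δ • IbdY d ℓ)⁻¹ (rootY (d - 1) ℓ) (rootY (d - 1) ℓ) = Δ := by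
  set K : ℂ := (Real.sqrt ((d : ℝ) - 1) : ℂ)
  have hK : K ≠ 0 := ofReal_sqrt_natCast_sub_one_ne_zero hd
  have hKm : K ^ 2 = ((d - 1 : ℕ) : ℂ) := ofReal_sqrt_natCast_sub_one_sq (by omega)
  set g : ℕ → ℂ := fun k => Δ * (-Δ / K) ^ k
  refine (inv_apply_eq_of_mulVec_eq_single
    (isUnit_det_sub_smul_one_sub_smul isHermitian_HmatY posSemidef_IbdY hz hΔ)
    (v := fun y => g y.1.length) ?_ _).trans (by simp [g])
  funext x
  refine (resolventY_mulVec_radial_apply z Δ g x).trans ?_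
  by_cases hx : x = rootY (d - 1) ℓ
  · subst hx
    rw [Pi.single_eq_same, rootY_val, List.length_nil, radialRow_geometric_zero hK hℓ, ← hKm,
      div_self (pow_ne_zero 2 hK)]
    linear_combination -hΔz
  · rw [Pi.single_eq_of_ne hx]
    exact radialRow_geometric_eq_zero hK hKm hΔz _
      (List.length_pos_iff.mpr (mt rootY_eq_iff.mpr hx)) x.2

theorem neg_sub_div_mul_ne_zero (hd : 2 ≤ d) (hz : 0 < z.im) (hΔ : 0 ≤ Δ.im) :
    -z - ((d : ℂ) / ((d : ℂ) - 1)) * Δ ≠ 0 := by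
  have hdR : (2 : ℝ) ≤ d := by exact_mod_cast hd
  have hq : (d : ℂ) / ((d : ℂ) - 1) = (((d : ℝ) / ((d : ℝ) - 1) : ℝ) : ℂ) := by push_cast; rfl
  have hpos : 0 < (d : ℝ) / ((d : ℝ) - 1) := div_pos (by linarith) (by linarith)
  intro h
  have := congrArg Complex.im h
  simp only [hq, Complex.sub_im, Complex.neg_im, Complex.im_ofReal_mul, Complex.zero_im] at this
  nlinarith

theorem resolventX_rootX (hd : 2 ≤ d) (hℓ : 1 ≤ ℓ) (hz : 0 < z.im) (hΔ : 0 ≤ Δ.im)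
    (hΔz : Δ ^ 2 + z * Δ + 1 = 0) :
    (HmatX d ℓ - z • 1 - Δ • IbdX d ℓ)⁻¹ (rootX d ℓ) (rootX d ℓ) =
      (-z - ((d : ℂ) / ((d : ℂ) - 1)) * Δ)⁻¹ := by
  set K : ℂ := (Real.sqrt ((d : ℝ) - 1) : ℂ)
  have hK : K ≠ 0 := ofReal_sqrt_natCast_sub_one_ne_zero hd
  have hKm : K ^ 2 = ((d - 1 : ℕ) : ℂ) := ofReal_sqrt_natCast_sub_one_sq (by omega)
  set β := -z - ((d : ℂ) / ((d : ℂ) - 1)) * Δ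
  set g : ℕ → ℂ := fun k => β⁻¹ * (-Δ / K) ^ k
  refine (inv_apply_eq_of_mulVec_eq_single
    (isUnit_det_sub_smul_one_sub_smul isHermitian_HmatX posSemidef_IbdX hz hΔ)
    (v := fun y => g (depthX y)) ?_ _).trans (by simp [g])
  funext x
  rcases eq_rootX_or_branchX x with rfl | ⟨a, w, rfl⟩
  · refine (resolventX_mulVec_radial_apply_rootX hℓ z Δ g).trans ?_
    rw [Pi.single_eq_same, radialRow_geometric_zero hK hℓ, hKm, Nat.cast_sub (by omega),
      Nat.cast_one, inv_mul_cancel₀ (neg_sub_div_mul_ne_zero hd hz hΔ)]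
  · refine (resolventX_mulVec_radial_apply_branchX z Δ g a w).trans ?_
    rw [Pi.single_eq_of_ne (branchX_ne_rootX a w)]
    have := w.2
    exact radialRow_geometric_eq_zero hK hKm hΔz _ (by omega) (by omega)

end FixedPoint

/-- **Fixed point property.** Fix `d ≥ 3`, `ℓ ≥ 1`, `z ∈ ℂ` with `Im z > 0`, and let `m_sc(z)`
be the unique root of `m² + z m + 1 = 0` with positive imaginary part and
`m_d(z) = 1/(-z - (d/(d-1)) m_sc(z))`. With
`Y_ℓ(Δ,z) := ((H_{𝒴_ℓ} - z·I - Δ·𝕀∂)⁻¹)_{oo}` and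
`X_ℓ(Δ,z) := ((H_{𝒳_ℓ} - z·I - Δ·𝕀∂)⁻¹)_{oo}`, one has
`Y_ℓ(m_sc(z), z) = m_sc(z)` and `X_ℓ(m_sc(z), z) = m_d(z)`. -/
theorem msc_fixed_point (d ℓ : ℕ) (hd : 3 ≤ d) (hℓ : 1 ≤ ℓ)
    (z msc : ℂ) (hz : 0 < z.im)
    (hmsc : msc ^ 2 + z * msc + 1 = 0) (him : 0 < msc.im) :
    ((HmatY d ℓ - z • 1 - msc • IbdY d ℓ)⁻¹) (rootY (d - 1) ℓ) (rootY (d - 1) ℓ) = msc ∧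
    ((HmatX d ℓ - z • 1 - msc • IbdX d ℓ)⁻¹) (rootX d ℓ) (rootX d ℓ) =
      (-z - ((d : ℂ) / ((d : ℂ) - 1)) * msc)⁻¹ :=
  ⟨resolventY_rootY (by omega) hℓ hz him.le hmsc, resolventX_rootX (by omega) hℓ hz him.le hmsc⟩
end

section
/- Fix integers d ≥ 3 and ℓ ≥ 1 and let z ∈ ℂ with Im z > 0. Let P be the inverse of H_{𝒴_ℓ} − z·I − m_sc(z)·𝕀∂, where 𝒴_ℓ is the ball of radius ℓ in the infinite (d−1)-ary tree with root o. Then, noting that m_sc(z)² ≠ 1 since |m_sc(z)| < 1 when Im z > 0, one has (P·𝕀∂·P·𝕀∂·P)_{oo} = m_sc(z)^{2ℓ+2} · m_d(z) · ( (1 − m_sc(z)^{2ℓ+2})/(d−1) + ((d−2)/(d−1)) · (1 − m_sc(z)^{2ℓ+2})/(1 − m_sc(z)²) ). -/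
open scoped Classical

/-!
On functions of the depth alone (radial functions) the matrix `H - z - m 𝕀∂` acts as a
three-term recursion in the depth. Since `m` and `m⁻¹` are the two roots of `ν² + zν + 1`, the
profiles `k ↦ (-√(d-1))⁻ᵏ ν^(k+1)` with `ν ∈ {m, m⁻¹}` solve it at every depth except at the
leaves, and at the root they produce a unit source. Hence `P e_o = V` and `P 𝟙_∂ = W` are explicit
radial vectors (`V` the profile of `m`, `W` a combination of both), and
`(P 𝕀∂ P 𝕀∂ P)_{oo} = V(ℓ) W(ℓ) W(0) = m^(2ℓ+3) (1 - m^(2ℓ+2)) / (1 - m²)`, which is the claimed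
expression because `m_d = m (d-1) / (d-1-m²)`. The resolvent exists because the imaginary part of
`H - z - m 𝕀∂` is negative definite.
-/

open Finset Matrix
open scoped ComplexOrder

theorem Matrix.IsHermitian.det_sub_smul_one_sub_smul_ne_zero {n : Type*} [Fintype n]
    [DecidableEq n] {H D : Matrix n n ℂ} (hH : H.IsHermitian) (hD : D.PosSemidef) {z μ : ℂ}
    (hz : 0 < z.im) (hμ : 0 ≤ μ.im) : (H - z • 1 - μ • D).det ≠ 0 := by
  intro hdet
  obtain ⟨u, hu0, hu⟩ := exists_mulVec_eq_zero_iff.mpr hdet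
  have hquad : star u ⬝ᵥ (H - z • 1 - μ • D) *ᵥ u =
      star u ⬝ᵥ H *ᵥ u - z * (star u ⬝ᵥ u) - μ * (star u ⬝ᵥ D *ᵥ u) := by
    simp only [sub_mulVec, smul_mulVec, one_mulVec, dotProduct_sub, dotProduct_smul,
      smul_eq_mul]
  rw [hu, dotProduct_zero] at hquad
  have hHim : (star u ⬝ᵥ H *ᵥ u).im = 0 := hH.im_star_dotProduct_mulVec_self u
  obtain ⟨-, hNim⟩ := Complex.nonneg_iff.mp (dotProduct_star_self_nonneg u)
  obtain ⟨hDre, hDim⟩ := Complex.nonneg_iff.mp (hD.dotProduct_mulVec_nonneg u)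
  have hNpos : 0 < (star u ⬝ᵥ u).re :=
    (Complex.pos_iff.mp (dotProduct_star_self_pos_iff.mpr hu0)).1
  have him := congrArg Complex.im hquad
  simp only [Complex.zero_im, Complex.sub_im, Complex.mul_im, hHim, ← hNim, ← hDim] at him
  nlinarith [mul_pos hz hNpos, mul_nonneg hμ hDre]

theorem Complex.ofReal_sub_sq_ne_zero {r : ℝ} (hr : 0 < r) {μ : ℂ} (hμ : μ.im ≠ 0) :
    (r : ℂ) - μ ^ 2 ≠ 0 := by
  intro h
  have hre := congrArg Complex.re h
  have him := congrArg Complex.im h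
  simp only [sq, Complex.sub_re, Complex.sub_im, Complex.mul_re, Complex.mul_im,
    Complex.ofReal_re, Complex.ofReal_im, Complex.zero_re, Complex.zero_im] at hre him
  have : μ.re = 0 := by
    rcases mul_eq_zero.mp (show μ.re * μ.im = 0 by linarith) with h | h
    · exact h
    · exact absurd h hμ
  nlinarith [sq_nonneg μ.im]

theorem inv_neg_sub_div_mul_eq {c z μ : ℂ} (hμ : μ ^ 2 + z * μ + 1 = 0) (hc : c - 1 ≠ 0)
    (hcμ : c - 1 - μ ^ 2 ≠ 0) : (-z - c / (c - 1) * μ)⁻¹ = μ * (c - 1) / (c - 1 - μ ^ 2) := by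
  have hμ0 : μ ≠ 0 := by rintro rfl; simp at hμ
  have h : -z - c / (c - 1) * μ = (c - 1 - μ ^ 2) / (μ * (c - 1)) := by
    field_simp
    linear_combination (1 - c) * hμ
  rw [h, inv_div]

namespace TreeBallY

variable {m ℓ d : ℕ}

theorem adj_iff {x y : TreeBallY m ℓ} :
    (treeGraphY m ℓ).Adj x y ↔ (∃ a, y.1 = x.1 ++ [a]) ∨ ∃ a, x.1 = y.1 ++ [a] := by
  rw [treeGraphY, SimpleGraph.fromRel_adj, and_iff_right_iff_imp]
  rintro (⟨a, h⟩ | ⟨a, h⟩) rfl <;> simpa using congrArg List.length h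

theorem length_le_length_add_one_of_adj {x y : TreeBallY m ℓ} (h : (treeGraphY m ℓ).Adj x y) :
    y.1.length ≤ x.1.length + 1 := by
  rcases adj_iff.mp h with ⟨a, ha⟩ | ⟨a, ha⟩
  · simp [ha]
  · simp [ha]
    omega

theorem length_le_length_add_walk_length {x y : TreeBallY m ℓ} (w : (treeGraphY m ℓ).Walk x y) :
    y.1.length ≤ x.1.length + w.length := by
  induction w with
  | nil => simp
  | cons h _ ih => grind [length_le_length_add_one_of_adj h, SimpleGraph.Walk.length_cons]

theorem exists_walk_root_length_eq (x : TreeBallY m ℓ) :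
    ∃ w : (treeGraphY m ℓ).Walk (rootY m ℓ) x, w.length = x.1.length := by
  obtain ⟨r, hr⟩ := x
  induction r using List.reverseRecOn with
  | nil => exact ⟨.nil, rfl⟩
  | append_singleton r a ih =>
    have hr' : r.length ≤ ℓ := by simp at hr; omega
    obtain ⟨w, hw⟩ := ih hr'
    exact ⟨w.concat (adj_iff.mpr (.inl ⟨a, rfl⟩)), (w.length_concat _).trans (by rw [hw]; simp)⟩

theorem dist_root (x : TreeBallY m ℓ) : (treeGraphY m ℓ).dist (rootY m ℓ) x = x.1.length := by
  obtain ⟨w, hw⟩ := exists_walk_root_length_eq x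
  obtain ⟨p, hp⟩ := SimpleGraph.Reachable.exists_walk_length_eq_dist ⟨w⟩
  refine le_antisymm (hw ▸ SimpleGraph.dist_le w) ?_
  rw [← hp]
  simpa [rootY] using length_le_length_add_walk_length p

def child (x : TreeBallY m ℓ) (hx : x.1.length < ℓ) (a : Fin m) : TreeBallY m ℓ :=
  ⟨x.1 ++ [a], by simpa using hx⟩

def parent (x : TreeBallY m ℓ) : TreeBallY m ℓ :=
  ⟨x.1.dropLast, by simpa using le_trans (Nat.sub_le _ 1) x.2⟩

theorem filter_children_eq_map_child {x : TreeBallY m ℓ} (hx : x.1.length < ℓ) :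
    ({y | ∃ a, y.1 = x.1 ++ [a]} : Finset (TreeBallY m ℓ)) =
      univ.map ⟨child x hx, fun a b h => by simpa [child] using congrArg Subtype.val h⟩ := by
  ext y
  simp only [mem_filter, mem_univ, true_and, mem_map]
  exact ⟨fun ⟨a, ha⟩ => ⟨a, Subtype.ext ha.symm⟩, fun ⟨a, ha⟩ => ⟨a, by rw [← ha]; rfl⟩⟩

theorem exists_eq_append_singleton_iff_eq_parent {x y : TreeBallY m ℓ} :
    (∃ a, x.1 = y.1 ++ [a]) ↔ x.1 ≠ [] ∧ y = parent x := by
  constructor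
  · rintro ⟨a, ha⟩
    exact ⟨by simp [ha], Subtype.ext (by simp [parent, ha])⟩
  · rintro ⟨hx, rfl⟩
    exact ⟨x.1.getLast hx, (List.dropLast_append_getLast hx).symm⟩

theorem sum_adj_radial {M : Type*} [AddCommMonoid M] (f : ℕ → M) (x : TreeBallY m ℓ) :
    ∑ y with (treeGraphY m ℓ).Adj x y, f y.1.length =
      (if x.1.length < ℓ then m • f (x.1.length + 1) else 0) +
        if x.1.length = 0 then 0 else f (x.1.length - 1) := by
  have hdisj : Disjoint ({y | ∃ a, y.1 = x.1 ++ [a]} : Finset (TreeBallY m ℓ))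
      ({y | ∃ a, x.1 = y.1 ++ [a]} : Finset (TreeBallY m ℓ)) := by
    refine disjoint_filter.mpr fun y _ ⟨a, ha⟩ ⟨b, hb⟩ => ?_
    simpa [ha] using congrArg List.length hb
  rw [filter_congr fun y _ => adj_iff, filter_or, sum_union hdisj]
  congr 1
  · split_ifs with hx
    · rw [filter_children_eq_map_child hx, sum_map]
      change ∑ a, f (x.1 ++ [a]).length = _
      simp
    · refine sum_eq_zero fun y hy => absurd ?_ hx
      obtain ⟨a, ha⟩ := (mem_filter.mp hy).2
      simpa [ha] using y.2
  · simp_rw [exists_eq_append_singleton_iff_eq_parent, sum_filter]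
    by_cases hx : x.1 = []
    · simp [hx]
    · simp only [ne_eq, hx, not_false_eq_true, true_and, Fintype.sum_ite_eq']
      simp [hx, parent]

def radial {α : Type*} (f : ℕ → α) (x : TreeBallY m ℓ) : α := f x.1.length

theorem radial_congr {α : Type*} {f g : ℕ → α} (h : ∀ k ≤ ℓ, f k = g k) :
    (radial f : TreeBallY m ℓ → α) = radial g :=
  funext fun x => h _ x.2

theorem single_root_eq_radial : Pi.single (rootY m ℓ) (1 : ℂ) = radial (Pi.single 0 1) := by
  funext x
  simp only [radial, Pi.single_apply, List.length_eq_zero_iff]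
  congr 1
  exact propext ⟨fun h => h ▸ rfl, fun h => Subtype.ext h⟩

/-- `H - z - μ 𝕀∂` on radial functions, in terms of the depth `k ≤ ℓ`, for `s = √(d-1)`:
a vertex of depth `k < ℓ` has `s²` children, each joined to it with weight `s⁻¹`. -/
noncomputable def radialOp (s z μ : ℂ) (ℓ : ℕ) (f : ℕ → ℂ) (k : ℕ) : ℂ :=
  (if k < ℓ then s * f (k + 1) else 0) + (if k = 0 then 0 else s⁻¹ * f (k - 1)) -
    (z + if k = ℓ then μ else 0) * f k

theorem IbdY_mulVec_apply (v : TreeBallY (d - 1) ℓ → ℂ) (x : TreeBallY (d - 1) ℓ) :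
    (IbdY d ℓ *ᵥ v) x = if x.1.length = ℓ then v x else 0 := by
  simp [IbdY, mulVec_diagonal, dist_root]

theorem IbdY_mulVec_radial (f : ℕ → ℂ) :
    IbdY d ℓ *ᵥ radial f = f ℓ • radial (Pi.single ℓ 1) := by
  funext x
  simp only [IbdY_mulVec_apply, radial, Pi.smul_apply, Pi.single_apply, smul_eq_mul]
  split_ifs with h <;> simp [h]

theorem HmatY_sub_sub_mulVec_radial (hd : 1 ≤ d) (z μ : ℂ) (f : ℕ → ℂ) :
    (HmatY d ℓ - z • 1 - μ • IbdY d ℓ) *ᵥ radial f =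
      radial (radialOp (Real.sqrt ((d : ℝ) - 1) : ℂ) z μ ℓ f) := by
  set s : ℂ := (Real.sqrt ((d : ℝ) - 1) : ℂ)
  have hs : ((d - 1 : ℕ) : ℂ) * s⁻¹ = s := by
    have : ((d - 1 : ℕ) : ℂ) = s ^ 2 := by
      rw [← Complex.ofReal_pow, Real.sq_sqrt (by simpa using hd)]
      push_cast [hd]
      ring
    rw [this, sq, mul_assoc]
    by_cases h0 : s = 0 <;> simp [h0]
  funext x
  have hH : (HmatY d ℓ *ᵥ radial f) x = s⁻¹ * ∑ y with (treeGraphY (d - 1) ℓ).Adj x y,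
      f y.1.length := by
    simp only [mulVec, dotProduct, HmatY, radial, ite_mul, zero_mul, sum_filter, mul_sum, mul_ite,
      mul_zero]
    rfl
  simp only [sub_mulVec, smul_mulVec, one_mulVec, IbdY_mulVec_apply, Pi.sub_apply,
    Pi.smul_apply, smul_eq_mul, hH, sum_adj_radial, nsmul_eq_mul, radialOp, radial]
  generalize x.1.length = k
  split_ifs <;> first | ring1 | linear_combination f (k + 1) * hs

noncomputable def geomProfile (s ν : ℂ) (k : ℕ) : ℂ := (-s)⁻¹ ^ k * ν ^ (k + 1)

theorem radialOp_geomProfile {s z μ ν : ℂ} {k : ℕ} (hs : s ≠ 0) (hν : ν ^ 2 + z * ν + 1 = 0)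
    (hk : k ≤ ℓ) :
    radialOp s z μ ℓ (geomProfile s ν) k =
      (Pi.single 0 1 + Pi.single ℓ ((-s)⁻¹ ^ ℓ * ν ^ (ℓ + 1) * (ν - μ)) : ℕ → ℂ) k := by
  have hsa : s * (-s)⁻¹ = -1 := by simp [hs]
  have hsa' : s⁻¹ = -(-s)⁻¹ := by simp [inv_neg]
  simp only [radialOp, geomProfile, Pi.add_apply, Pi.single_apply, hsa']
  generalize (-s)⁻¹ = a at hsa ⊢
  rcases k with _ | k
  · split_ifs <;> first | omega | subst_vars
    · linear_combination ν ^ 2 * hsa - hν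
    · linear_combination -hν
  · simp only [Nat.add_sub_cancel, Nat.succ_ne_zero, if_false]
    split_ifs <;> first | omega | subst_vars
    · linear_combination a ^ (k + 1) * ν ^ (k + 3) * hsa - a ^ (k + 1) * ν ^ (k + 1) * hν
    · linear_combination -(a ^ (k + 1) * ν ^ (k + 1)) * hν

theorem sqrt_sub_one_ne_zero (hd : 2 ≤ d) : (Real.sqrt ((d : ℝ) - 1) : ℂ) ≠ 0 := by
  rw [Complex.ofReal_ne_zero, Real.sqrt_ne_zero']
  have : (2 : ℝ) ≤ d := by exact_mod_cast hd
  linarith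

theorem HmatY_sub_sub_mulVec_radial_geomProfile (hd : 2 ≤ d) {z μ ν : ℂ}
    (hν : ν ^ 2 + z * ν + 1 = 0) :
    (HmatY d ℓ - z • 1 - μ • IbdY d ℓ) *ᵥ radial (geomProfile (Real.sqrt ((d : ℝ) - 1)) ν) =
      radial (Pi.single 0 1) + ((-(Real.sqrt ((d : ℝ) - 1) : ℂ))⁻¹ ^ ℓ * ν ^ (ℓ + 1) * (ν - μ)) •
        radial (Pi.single ℓ 1) := by
  rw [HmatY_sub_sub_mulVec_radial (by omega),
    radial_congr fun k hk => radialOp_geomProfile (sqrt_sub_one_ne_zero hd) hν hk]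
  funext x
  simp [radial, Pi.single_apply]

theorem HmatY_isHermitian : (HmatY d ℓ).IsHermitian :=
  IsHermitian.ext fun x y => by
    simp only [HmatY, (treeGraphY (d - 1) ℓ).adj_comm y x]
    split_ifs <;> simp [← Complex.ofReal_inv]

theorem IbdY_posSemidef : (IbdY d ℓ).PosSemidef :=
  .diagonal fun x => by dsimp only; split_ifs <;> simp

theorem mul_IbdY_mul_IbdY_mul_apply_root_of_mulVec
    {P : Matrix (TreeBallY (d - 1) ℓ) (TreeBallY (d - 1) ℓ) ℂ} {f g : ℕ → ℂ}
    (hf : P *ᵥ radial (Pi.single 0 1) = radial f) (hg : P *ᵥ radial (Pi.single ℓ 1) = radial g) :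
    (P * IbdY d ℓ * P * IbdY d ℓ * P) (rootY (d - 1) ℓ) (rootY (d - 1) ℓ) = f ℓ * g ℓ * g 0 := by
  calc (P * IbdY d ℓ * P * IbdY d ℓ * P) (rootY (d - 1) ℓ) (rootY (d - 1) ℓ)
      = (P *ᵥ IbdY d ℓ *ᵥ P *ᵥ IbdY d ℓ *ᵥ P *ᵥ radial (Pi.single 0 1)) (rootY (d - 1) ℓ) := by
        rw [← single_root_eq_radial, mulVec_mulVec, mulVec_mulVec, mulVec_mulVec,
          mulVec_mulVec, mulVec_single_one]
        rfl
    _ = f ℓ * g ℓ * g 0 := by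
        simp only [hf, hg, IbdY_mulVec_radial, mulVec_smul, Pi.smul_apply, smul_eq_mul, mul_assoc]
        rfl

theorem mul_IbdY_mul_IbdY_mul_apply_root (hd : 2 ≤ d) {z μ : ℂ} (hμ : μ ^ 2 + z * μ + 1 = 0)
    (hμ1 : μ ^ 2 ≠ 1) {P : Matrix (TreeBallY (d - 1) ℓ) (TreeBallY (d - 1) ℓ) ℂ}
    (hP : P * (HmatY d ℓ - z • 1 - μ • IbdY d ℓ) = 1) :
    (P * IbdY d ℓ * P * IbdY d ℓ * P) (rootY (d - 1) ℓ) (rootY (d - 1) ℓ) =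
      μ ^ (2 * ℓ + 3) * (1 - μ ^ (2 * ℓ + 2)) / (1 - μ ^ 2) := by
  set s : ℂ := (Real.sqrt ((d : ℝ) - 1) : ℂ)
  have hs : s ≠ 0 := sqrt_sub_one_ne_zero hd
  have hμ0 : μ ≠ 0 := by rintro rfl; simp at hμ
  have hμ' : μ⁻¹ ^ 2 + z * μ⁻¹ + 1 = 0 := by
    field_simp
    linear_combination hμ
  -- the leaf defect of the profile of `μ⁻¹`; the profile of `μ` has none
  set κ : ℂ := (-s)⁻¹ ^ ℓ * μ⁻¹ ^ (ℓ + 1) * (μ⁻¹ - μ)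
  have hκ : κ ≠ 0 := by
    have : μ⁻¹ - μ ≠ 0 := fun h => hμ1 (by field_simp at h; linear_combination -h)
    simp [κ, hs, hμ0, this]
  have solve : ∀ {u v}, (HmatY d ℓ - z • 1 - μ • IbdY d ℓ) *ᵥ u = v → P *ᵥ v = u := by
    intro u v h
    rw [← h, mulVec_mulVec, hP, one_mulVec]
  set w := κ⁻¹ • (geomProfile s μ⁻¹ - geomProfile s μ)
  have hV : P *ᵥ radial (Pi.single 0 1) = radial (m := d - 1) (ℓ := ℓ) (geomProfile s μ) :=
    solve (by simpa using HmatY_sub_sub_mulVec_radial_geomProfile hd (μ := μ) hμ)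
  have hW : P *ᵥ radial (Pi.single ℓ 1) = radial (m := d - 1) (ℓ := ℓ) w := by
    refine solve ?_
    change _ *ᵥ (κ⁻¹ • (radial (geomProfile s μ⁻¹) - radial (geomProfile s μ)) :
      TreeBallY (d - 1) ℓ → ℂ) = _
    rw [mulVec_smul, mulVec_sub, HmatY_sub_sub_mulVec_radial_geomProfile hd hμ',
      HmatY_sub_sub_mulVec_radial_geomProfile hd hμ]
    rw [sub_self, mul_zero, zero_smul, add_zero, add_sub_cancel_left, smul_smul,
      inv_mul_cancel₀ hκ, one_smul]
  rw [mul_IbdY_mul_IbdY_mul_apply_root_of_mulVec hV hW]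
  have h1 : (1 : ℂ) - μ ^ 2 ≠ 0 := sub_ne_zero.mpr (Ne.symm hμ1)
  have hA : (-s) ^ ℓ ≠ 0 := pow_ne_zero _ (neg_ne_zero.mpr hs)
  simp only [w, κ, geomProfile, Pi.smul_apply, Pi.sub_apply, smul_eq_mul, inv_pow]
  generalize (-s) ^ ℓ = A at hA ⊢
  field_simp
  ring

end TreeBallY

theorem P_Ibd_P_Ibd_P_oo_general (d ℓ : ℕ) (hd : 3 ≤ d)
    (z msc : ℂ) (hz : 0 < z.im)
    (hmsc : msc ^ 2 + z * msc + 1 = 0) (him : 0 < msc.im)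
    (P : Matrix (TreeBallY (d - 1) ℓ) (TreeBallY (d - 1) ℓ) ℂ)
    (hP : P = (HmatY d ℓ - z • 1 - msc • IbdY d ℓ)⁻¹) :
    msc ^ 2 ≠ 1 ∧
    (P * IbdY d ℓ * P * IbdY d ℓ * P) (rootY (d - 1) ℓ) (rootY (d - 1) ℓ) =
      msc ^ (2 * ℓ + 2) * (-z - ((d : ℂ) / ((d : ℂ) - 1)) * msc)⁻¹ *
        ((1 - msc ^ (2 * ℓ + 2)) / ((d : ℂ) - 1) +
          (((d : ℂ) - 2) / ((d : ℂ) - 1)) * (1 - msc ^ (2 * ℓ + 2)) / (1 - msc ^ 2)) := by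
  have h1 : (1 : ℂ) - msc ^ 2 ≠ 0 := by
    simpa using Complex.ofReal_sub_sq_ne_zero one_pos him.ne'
  have hsq : msc ^ 2 ≠ 1 := fun h => h1 (by rw [h, sub_self])
  have hd1 : (d : ℂ) - 1 - msc ^ 2 ≠ 0 := by
    have : (0 : ℝ) < d - 1 := by
      have : (3 : ℝ) ≤ d := by exact_mod_cast hd
      linarith
    simpa using Complex.ofReal_sub_sq_ne_zero this him.ne'
  have hd0 : (d : ℂ) - 1 ≠ 0 := by
    rw [sub_ne_zero, ne_eq, ← Nat.cast_one, Nat.cast_inj]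
    omega
  have hdet := (TreeBallY.HmatY_isHermitian (d := d) (ℓ := ℓ)).det_sub_smul_one_sub_smul_ne_zero
    TreeBallY.IbdY_posSemidef hz him.le
  refine ⟨hsq, ?_⟩
  rw [TreeBallY.mul_IbdY_mul_IbdY_mul_apply_root (by omega) hmsc hsq
      (hP ▸ nonsing_inv_mul _ (isUnit_iff_ne_zero.mpr hdet)),
    inv_neg_sub_div_mul_eq hmsc hd0 hd1]
  field_simp
  ring

/-- For `d ≥ 3`, `ℓ ≥ 1`, `z ∈ ℂ` with `Im z > 0`, `m_sc(z)` the unique root of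
`m² + z m + 1 = 0` with positive imaginary part (so `m_sc(z)² ≠ 1`),
`m_d(z) = 1/(-z - (d/(d-1)) m_sc(z))`, and `P` the inverse of `H_{𝒴_ℓ} - z·I - m_sc(z)·𝕀∂`,
one has `(P·𝕀∂·P·𝕀∂·P)_{oo} = m_sc^{2ℓ+2} m_d ((1-m_sc^{2ℓ+2})/(d-1)
+ ((d-2)/(d-1))(1-m_sc^{2ℓ+2})/(1-m_sc²))`. -/
theorem P_Ibd_P_Ibd_P_oo (d ℓ : ℕ) (hd : 3 ≤ d) (hℓ : 1 ≤ ℓ)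
    (z msc : ℂ) (hz : 0 < z.im)
    (hmsc : msc ^ 2 + z * msc + 1 = 0) (him : 0 < msc.im)
    (P : Matrix (TreeBallY (d - 1) ℓ) (TreeBallY (d - 1) ℓ) ℂ)
    (hP : P = (HmatY d ℓ - z • 1 - msc • IbdY d ℓ)⁻¹) :
    msc ^ 2 ≠ 1 ∧
    (P * IbdY d ℓ * P * IbdY d ℓ * P) (rootY (d - 1) ℓ) (rootY (d - 1) ℓ) =
      msc ^ (2 * ℓ + 2) * (-z - ((d : ℂ) / ((d : ℂ) - 1)) * msc)⁻¹ *
        ((1 - msc ^ (2 * ℓ + 2)) / ((d : ℂ) - 1) +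
          (((d : ℂ) - 2) / ((d : ℂ) - 1)) * (1 - msc ^ (2 * ℓ + 2)) / (1 - msc ^ 2)) :=
  P_Ibd_P_Ibd_P_oo_general d ℓ hd z msc hz hmsc him P hP
end
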